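/- arXiv:0704.2149 — 2 statements merged into one kernel-verified Lean document; each statement's English description precedes it below -/
import Mathlib

section
/- Let θ(z) = z + c_1 z² + c_2 z³ + … be a formal power series over ℂ and H(1+ξ) = A_0 + A_1 ξ + A_2 ξ² + … a formal power series in ξ. Consider the two-variable formal power series Θ(z,u) := (θ(z)−θ(u))/(z−u) = 1 + ∑_{j≥1} c_j (∑_{a+b=j} z^a u^b), which has constant term 1. Then H(Θ(z,u)) = ∑_m A_{|m|} · (|m|!/∏_j m_j!) · c^m · ∑_{p+q=‖m‖} W_p(m) z^p u^q, where the outer sum is over finitely supported sequences m of nonnegative integers and W_p(m) denotes the coefficient of t^p in ∏_{j≥1} (1 + t + ⋯ + t^j)^{m_j} (equivalently W_p(m) = 𝒫_p(Ñ_1, …, Ñ_p) with Ñ_p = −∑_j m_j + ∑_{j: (j+1) divides p} (j+1)·m_j). -/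
open PowerSeries Finset

/-- Formal composition `H(1 + u) = ∑ₖ Aₖ uᵏ` of a one-variable series
`H(1+ξ) = ∑ₖ Aₖ ξᵏ` with a two-variable series `1 + u`, where `u` has zero constant
term: only terms with `k ≤ ` total degree contribute. -/
noncomputable def compMv (A : ℕ → ℂ) (u : MvPowerSeries (Fin 2) ℂ) :
    MvPowerSeries (Fin 2) ℂ :=
  fun d => ∑ k ∈ Finset.range ((d 0 + d 1) + 1), A k * MvPowerSeries.coeff (R := ℂ) d (u ^ k)

/-- The two-variable series `Θ(z,u) = (θ(z) − θ(u))/(z − u) = 1 + ∑_{j≥1} cⱼ ∑_{a+b=j} z^a u^b`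
for `θ(z) = z + c₁z² + c₂z³ + ⋯`: its coefficient at `z^a u^b` is `c_{a+b}` (with `c₀ = 1`). -/
noncomputable def ThetaQuot (c : ℕ → ℂ) : MvPowerSeries (Fin 2) ℂ :=
  fun d => if d 0 + d 1 = 0 then 1 else c (d 0 + d 1)

/-- `W_p(m)`: the coefficient of `t^p` in `∏_{j≥1} (1 + t + ⋯ + tʲ)^{mⱼ}`
(equivalently `𝒫_p(Ñ₁,…,Ñ_p)` with `Ñ_p = −∑ⱼ mⱼ + ∑_{(j+1) ∣ p} (j+1)·mⱼ`). -/
noncomputable def Wcoeff (m : ℕ →₀ ℕ) (p : ℕ) : ℂ :=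
  PowerSeries.coeff (R := ℂ) p
    (∏ j ∈ m.support, (∑ i ∈ Finset.range (j + 1), (PowerSeries.X : PowerSeries ℂ) ^ i) ^ m j)

/-!
Write `Θ − 1 = ∑_{j ≥ 1} c_j h_j` with `h_j(z,u) = ∑_{a+b=j} z^a u^b`; a coefficient of total
degree `N` only sees the part with `j ≤ N`, a polynomial. The multinomial theorem expands its
`k`-th power as `∑_{|m| = k} (k!/∏ m_j!) c^m ∏ h_j^{m_j}`. The product `∏ h_j^{m_j}` is homogeneous
of degree `‖m‖`, and setting `u = 1` turns it into `∏ (1 + t + ⋯ + t^j)^{m_j}`; hence its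
coefficient of `z^p u^q` is `W_p(m)` if `p + q = ‖m‖` and `0` otherwise.
-/

open MvPolynomial

theorem Finsupp.eq_single_zero_add_single_one_iff {e : Fin 2 →₀ ℕ} {p q : ℕ} :
    e = single 0 p + single 1 q ↔ e 0 = p ∧ e 1 = q := by
  constructor
  · rintro rfl; simp
  · rintro ⟨rfl, rfl⟩; ext i; fin_cases i <;> simp

theorem Finsupp.fin_two_eq_zero_iff {e : Fin 2 →₀ ℕ} : e = 0 ↔ e 0 + e 1 = 0 := by
  rw [← degree_eq_zero_iff, degree_eq_sum, Fin.sum_univ_two]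

theorem MvPowerSeries.coeff_pow_congr {σ R : Type*} [CommSemiring R] {f g : MvPowerSeries σ R}
    {d : σ →₀ ℕ} (h : ∀ e ≤ d, coeff e f = coeff e g) (k : ℕ) :
    coeff d (f ^ k) = coeff d (g ^ k) := by
  classical
  rw [coeff_pow, coeff_pow]
  refine sum_congr rfl fun l hl => prod_congr rfl fun i hi => h _ ?_
  rw [← (mem_finsuppAntidiag.1 hl).1]
  exact single_le_sum (f := fun i => l i) (fun _ _ => zero_le) hi

theorem Finset.sum_pow_eq_sum_finsuppAntidiag {ι R : Type*} [DecidableEq ι] [CommSemiring R]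
    (s : Finset ι) (f : ι → R) (n : ℕ) :
    (∑ i ∈ s, f i) ^ n =
      ∑ m ∈ s.finsuppAntidiag n, (m.multinomial : R) * ∏ i ∈ m.support, f i ^ m i := by
  rw [sum_pow_eq_sum_piAntidiag, finsuppAntidiag, sum_map, ← sum_attach (piAntidiag s n)]
  refine sum_congr rfl fun k _ => ?_
  rw [Finsupp.multinomial_eq_of_support_subset (filter_subset _ s)]
  congr 1
  exact (prod_subset (filter_subset _ s) fun i _ hi => by simp_all).symm

section Dehomogenize

variable {R : Type*} [CommSemiring R]

variable (R) in
noncomputable def dehomogenize : MvPolynomial (Fin 2) R →ₐ[R] PowerSeries R :=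
  aeval ![PowerSeries.X, 1]

theorem coeff_dehomogenize_monomial (v : Fin 2 →₀ ℕ) (a : R) (p : ℕ) :
    PowerSeries.coeff p (dehomogenize R (monomial v a)) = if v 0 = p then a else 0 := by
  rw [dehomogenize, aeval_monomial, Finsupp.prod_fintype _ _ fun _ => pow_zero _,
    Fin.prod_univ_two]
  simp [eq_comm]

theorem MvPolynomial.IsHomogeneous.coeff_single_add_single {P : MvPolynomial (Fin 2) R}
    {p q : ℕ} (hP : P.IsHomogeneous (p + q)) :
    coeff (Finsupp.single 0 p + Finsupp.single 1 q) P = PowerSeries.coeff p (dehomogenize R P) := by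
  conv_rhs => rw [P.as_sum, map_sum, map_sum]
  simp_rw [coeff_dehomogenize_monomial]
  rw [sum_eq_single (Finsupp.single 0 p + Finsupp.single 1 q)]
  · simp
  · intro v hv hne
    refine if_neg fun h0 => hne (Finsupp.eq_single_zero_add_single_one_iff.2 ⟨h0, ?_⟩)
    have hdeg : v.degree = p + q := by_contra fun h => mem_support_iff.1 hv (hP.coeff_eq_zero h)
    rw [Finsupp.degree_eq_sum, Fin.sum_univ_two] at hdeg
    omega
  · intro hd
    simp [notMem_support_iff.1 hd]

variable (R) in
/-- `MvPolynomial.hsymm (Fin 2) R j`, written as `∑_{a+b=j} z^a u^b`. -/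
noncomputable def hsymm₂ (j : ℕ) : MvPolynomial (Fin 2) R :=
  ∑ x ∈ antidiagonal j, monomial (Finsupp.single 0 x.1 + Finsupp.single 1 x.2) 1

theorem coeff_hsymm₂ (j : ℕ) (e : Fin 2 →₀ ℕ) :
    coeff e (hsymm₂ R j) = if e 0 + e 1 = j then 1 else 0 := by
  have hmem : ∀ x : ℕ × ℕ,
      Finsupp.single 0 x.1 + Finsupp.single 1 x.2 = e ↔ (e 0, e 1) = x := fun x => by
    rw [eq_comm, Finsupp.eq_single_zero_add_single_one_iff, Prod.ext_iff]
  simp only [hsymm₂, coeff_sum, MvPolynomial.coeff_monomial, hmem]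
  simp

theorem isHomogeneous_hsymm₂ (j : ℕ) : (hsymm₂ R j).IsHomogeneous j :=
  IsHomogeneous.sum _ _ _ fun x hx => isHomogeneous_monomial _ (by simpa using hx)

theorem dehomogenize_hsymm₂ (j : ℕ) :
    dehomogenize R (hsymm₂ R j) = ∑ i ∈ range (j + 1), PowerSeries.X ^ i := by
  simp [dehomogenize, hsymm₂, aeval_monomial, Nat.sum_antidiagonal_eq_sum_range_succ_mk]

end Dehomogenize

theorem coeff_prod_hsymm₂_pow (m : ℕ →₀ ℕ) (p q : ℕ) :
    coeff (Finsupp.single 0 p + Finsupp.single 1 q) (∏ j ∈ m.support, hsymm₂ ℂ j ^ m j) =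
      if (m.sum fun j e => j * e) = p + q then Wcoeff m p else 0 := by
  have hom : (∏ j ∈ m.support, hsymm₂ ℂ j ^ m j).IsHomogeneous (m.sum fun j e => j * e) :=
    IsHomogeneous.prod _ _ _ fun j _ => by
      simpa [mul_comm] using (isHomogeneous_hsymm₂ j).pow (m j)
  split_ifs with h
  · rw [h] at hom
    simp [hom.coeff_single_add_single, Wcoeff, dehomogenize_hsymm₂]
  · exact hom.coeff_eq_zero (by simpa using Ne.symm h)

noncomputable def thetaPoly (c : ℕ → ℂ) (N : ℕ) : MvPolynomial (Fin 2) ℂ :=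
  ∑ j ∈ Icc 1 N, MvPolynomial.C (c j) * hsymm₂ ℂ j

theorem coeff_thetaPoly (c : ℕ → ℂ) (N : ℕ) (e : Fin 2 →₀ ℕ) :
    coeff e (thetaPoly c N) = if e 0 + e 1 ∈ Icc 1 N then c (e 0 + e 1) else 0 := by
  simp [thetaPoly, coeff_sum, MvPolynomial.coeff_C_mul, coeff_hsymm₂, eq_comm (a := e 0 + e 1)]

theorem coeff_ThetaQuot_sub_one_eq_coeff_thetaPoly (c : ℕ → ℂ) {N : ℕ} {e : Fin 2 →₀ ℕ}
    (he : e 0 + e 1 ≤ N) :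
    MvPowerSeries.coeff e (ThetaQuot c - 1) = coeff e (thetaPoly c N) := by
  rw [map_sub, MvPowerSeries.coeff_one, coeff_thetaPoly]
  simp only [Finsupp.fin_two_eq_zero_iff]
  change (if e 0 + e 1 = 0 then 1 else c (e 0 + e 1)) - _ = _
  split_ifs <;> simp_all

theorem coeff_thetaPoly_pow (c : ℕ → ℂ) (N p q k : ℕ) :
    coeff (Finsupp.single 0 p + Finsupp.single 1 q) (thetaPoly c N ^ k) =
      ∑ m ∈ (Icc 1 N).finsuppAntidiag k, (m.multinomial : ℂ) * (∏ j ∈ m.support, c j ^ m j) *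
        if (m.sum fun j e => j * e) = p + q then Wcoeff m p else 0 := by
  rw [thetaPoly, sum_pow_eq_sum_finsuppAntidiag, coeff_sum]
  refine sum_congr rfl fun m _ => ?_
  rw [← coeff_prod_hsymm₂_pow, ← MvPolynomial.coeff_C_mul]
  congr 1
  simp only [mul_pow, prod_mul_distrib, map_mul, map_prod, map_pow, map_natCast, mul_assoc]

theorem support_subset_Icc_of_weight_eq {m : ℕ →₀ ℕ} {N : ℕ} (h0 : m 0 = 0)
    (hw : (m.sum fun j e => j * e) = N) : m.support ⊆ Icc 1 N := by
  intro j hj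
  have hj0 : m j ≠ 0 := Finsupp.mem_support_iff.1 hj
  have hj : j ≠ 0 := by rintro rfl; exact hj0 h0
  have hle : j * m j ≤ m.sum fun j e => j * e :=
    single_le_sum (f := fun i => i * m i) (fun _ _ => zero_le) (Finsupp.mem_support_iff.2 hj0)
  exact mem_Icc.2 ⟨Nat.one_le_iff_ne_zero.2 hj,
    hw ▸ (Nat.le_mul_of_pos_right j (Nat.pos_of_ne_zero hj0)).trans hle⟩

theorem finsum_weight_eq_sum {M : Type*} [AddCommMonoid M] (F : (ℕ →₀ ℕ) → M) (N : ℕ) :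
    ∑ᶠ (m : ℕ →₀ ℕ) (_ : m 0 = 0 ∧ (m.sum fun j e => j * e) = N), F m =
      ∑ k ∈ range (N + 1), ∑ m ∈ (Icc 1 N).finsuppAntidiag k,
        if (m.sum fun j e => j * e) = N then F m else 0 := by
  rw [← sum_biUnion, ← sum_filter]
  · refine finsum_cond_eq_sum_of_cond_iff F fun {m} _ => ?_
    simp only [mem_filter, mem_biUnion, mem_range, mem_finsuppAntidiag]
    constructor
    · rintro ⟨h0, hw⟩
      have hsupp := support_subset_Icc_of_weight_eq h0 hw
      refine ⟨⟨_, Nat.lt_succ_of_le ?_, rfl, hsupp⟩, hw⟩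
      calc ∑ j ∈ Icc 1 N, m j ≤ ∑ j ∈ Icc 1 N, j * m j :=
            sum_le_sum fun j hj => Nat.le_mul_of_pos_left _ (mem_Icc.1 hj).1
        _ = N := (Finsupp.sum_of_support_subset m hsupp _ fun _ _ => mul_zero _).symm.trans hw
    · rintro ⟨⟨k, -, -, hsupp⟩, hw⟩
      refine ⟨Finsupp.notMem_support_iff.1 fun h => ?_, hw⟩
      simpa using hsupp h
  · intro k _ l _ hkl
    exact disjoint_left.2 fun m hk hl =>
      hkl ((mem_finsuppAntidiag.1 hk).1.symm.trans (mem_finsuppAntidiag.1 hl).1)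

/-- For `θ(z) = z + c₁z² + ⋯` and `H(1+ξ) = A₀ + A₁ξ + ⋯`, one has
`H(Θ(z,u)) = ∑_m A_{|m|} (|m|!/∏ mⱼ!) c^m ∑_{p+q=‖m‖} W_p(m) z^p u^q`, i.e. for all
`p, q` the coefficient of `z^p u^q` in `H(Θ(z,u))` equals
`∑_{m : ‖m‖ = p+q} A_{|m|} · (|m|!/∏ⱼ mⱼ!) · c^m · W_p(m)`, the sum over finitely
supported sequences `m = (m₁, m₂, …)` (i.e. `m 0 = 0`). -/
theorem coeff_H_ThetaQuot (c A : ℕ → ℂ) (p q : ℕ) :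
    MvPowerSeries.coeff (R := ℂ) (Finsupp.single 0 p + Finsupp.single 1 q)
        (compMv A (ThetaQuot c - 1)) =
      ∑ᶠ (m : ℕ →₀ ℕ) (_ : m 0 = 0 ∧ (m.sum fun j e => j * e) = p + q),
        A (m.sum fun _ e => e) * (m.multinomial : ℂ) *
          (∏ j ∈ m.support, c j ^ m j) * Wcoeff m p := by
  set d : Fin 2 →₀ ℕ := Finsupp.single 0 p + Finsupp.single 1 q
  have hd : d 0 + d 1 = p + q := by simp [d]
  have htrunc : ∀ e ≤ d, MvPowerSeries.coeff e (ThetaQuot c - 1) =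
      MvPowerSeries.coeff e (thetaPoly c (p + q) : MvPowerSeries (Fin 2) ℂ) := fun e he => by
    rw [MvPolynomial.coeff_coe,
      coeff_ThetaQuot_sub_one_eq_coeff_thetaPoly c (hd ▸ add_le_add (he 0) (he 1))]
  rw [finsum_weight_eq_sum]
  change ∑ k ∈ range (d 0 + d 1 + 1), A k * MvPowerSeries.coeff d ((ThetaQuot c - 1) ^ k) = _
  rw [hd]
  refine sum_congr rfl fun k _ => ?_
  rw [MvPowerSeries.coeff_pow_congr htrunc, ← MvPolynomial.coe_pow, MvPolynomial.coeff_coe,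
    coeff_thetaPoly_pow, mul_sum]
  refine sum_congr rfl fun m hm => ?_
  obtain ⟨hk, hsupp⟩ := mem_finsuppAntidiag.1 hm
  rw [← hk, ← Finsupp.sum_of_support_subset m hsupp (fun _ e => e) fun _ _ => rfl]
  split_ifs <;> ring
end

section
/- For a formal power series h(X) = 1 + b_1 X + b_2 X² + … over a commutative ℚ-algebra, the Faber polynomials satisfy the explicit formula (1/n)·𝒬_n(b_1, …, b_n) = ∑_{μ: ∑_j j·μ_j = n} (−1)^{∑_j μ_j} · (∑_j μ_j − 1)! · ∏_j (b_j^{μ_j}/μ_j!), where the sum is over all finitely supported sequences μ = (μ_1, …, μ_n) of nonnegative integers with ∑_j j·μ_j = n (each such μ is nonzero, so (∑μ_j − 1)! is well defined). -/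
open PowerSeries Finset

/-- The power series `h(X) = 1 + b₁ X + b₂ X² + ⋯` attached to a sequence `b`. -/
noncomputable def hSeries {R : Type*} [CommRing R] (b : ℕ → R) : PowerSeries R :=
  PowerSeries.mk fun n => if n = 0 then 1 else b n

/-- The Faber polynomials `𝒬ₙ(b)`, defined by
`−X·h'(X)/h(X) = ∑_{n≥1} 𝒬ₙ(b) Xⁿ` where `h(X) = 1 + b₁X + b₂X² + ⋯`; the inverse
`1/h` exists since the constant term of `h` is `1`. -/
noncomputable def faberQ {R : Type*} [CommRing R] (b : ℕ → R) (n : ℕ) : R :=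
  PowerSeries.coeff (R := R) n
    (-(PowerSeries.X * (hSeries b).derivativeFun) * (hSeries b).invOfUnit 1)

/-!
Write `h = 1 + g` with `g(0) = 0`. Modulo `X^(n+1)` we have `1/h = ∑_{k ≤ n} (-g)^k`, and
`(k+1) · X g' g^k = X (g^(k+1))'`, whose `n`-th coefficient is `n` times that of `g^(k+1)`.
Hence `(1/n) 𝒬ₙ = ∑_{m ≥ 1} ((-1)^m / m) [Xⁿ] g^m`. By the multinomial theorem, `[Xⁿ] g^m` is
the sum over multiplicity vectors `μ` with `∑ μⱼ = m` and `∑ j μⱼ = n` of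
`(m! / ∏ μⱼ!) ∏ bⱼ^μⱼ`, and `((-1)^m / m) · m! = (-1)^m (m-1)!`.
-/

theorem Finset.sum_finsuppAntidiag_eq_sum_piAntidiag {ι M : Type*} [DecidableEq ι]
    [AddCommMonoid M] (s : Finset ι) (m : ℕ) (G : (ι → ℕ) → M) :
    ∑ μ ∈ s.finsuppAntidiag m, G μ = ∑ f ∈ s.piAntidiag m, G f := by
  rw [finsuppAntidiag, sum_map, ← sum_attach (piAntidiag s m)]
  rfl

namespace PowerSeries

variable {R : Type*} [CommRing R]

theorem coeff_eq_of_X_pow_dvd_sub {f g : R⟦X⟧} {N n : ℕ} (h : X ^ N ∣ f - g) (hn : n < N) :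
    coeff n f = coeff n g := by
  simpa [sub_eq_zero] using X_pow_dvd_iff.mp h n hn

theorem coeff_mul_eq_coeff_mul_geom_sum {f v : R⟦X⟧} (hf : constantCoeff f = 0)
    (hv : (1 + f) * v = 1) (A : R⟦X⟧) {n N : ℕ} (hn : n < N) :
    coeff n (A * v) = coeff n (A * ∑ k ∈ range N, (-f) ^ k) := by
  refine coeff_eq_of_X_pow_dvd_sub ?_ hn
  have hgeom := mul_neg_geom_sum (-f) N
  have hdiff : A * v - A * ∑ k ∈ range N, (-f) ^ k = A * v * (-f) ^ N := by
    linear_combination (A * ∑ k ∈ range N, (-f) ^ k) * hv - A * v * hgeom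
  rw [hdiff]
  exact Dvd.dvd.mul_left (pow_dvd_pow_of_dvd (X_dvd_iff.mpr (by simp [hf])) N) _

theorem coeff_X_mul_derivative (F : R⟦X⟧) (n : ℕ) :
    coeff n (X * d⁄dX R F) = n * coeff n F := by
  cases n with
  | zero => simp
  | succ n => rw [coeff_succ_X_mul, coeff_derivative, mul_comm]; push_cast; ring

theorem coeff_X_mul_derivative_mul_pow (f : R⟦X⟧) (k n : ℕ) :
    (k + 1) * coeff n (X * d⁄dX R f * f ^ k) = n * coeff n (f ^ (k + 1)) := by
  rw [← coeff_X_mul_derivative, derivative_pow, ← map_natCast (C (R := R)),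
    add_tsub_cancel_right, show X * (C (↑(k + 1) : R) * f ^ k * d⁄dX R f) =
      C (↑(k + 1) : R) * (X * d⁄dX R f * f ^ k) by ring, coeff_C_mul]
  push_cast
  ring

theorem coeff_pow_sum_C_mul_X_pow (s : Finset ℕ) (c : ℕ → R) (m n : ℕ) :
    coeff n ((∑ j ∈ s, C (c j) * X ^ j) ^ m) =
      ∑ μ ∈ (s.finsuppAntidiag m).filter (fun μ => (μ.sum fun j i => j * i) = n),
        (μ.multinomial : R) * ∏ j ∈ μ.support, c j ^ μ j := by
  have hterm (f : ℕ → ℕ) : (Nat.multinomial s f : R⟦X⟧) * ∏ j ∈ s, (C (c j) * X ^ j) ^ f j =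
      C (Nat.multinomial s f * ∏ j ∈ s, c j ^ f j) * X ^ (∑ j ∈ s, j * f j) := by
    simp only [mul_pow, prod_mul_distrib, ← pow_mul, prod_pow_eq_pow_sum, map_mul, map_prod,
      map_pow, map_natCast, mul_assoc]
  rw [sum_pow_eq_sum_piAntidiag, map_sum, sum_filter]
  simp only [hterm, coeff_C_mul_X_pow, @eq_comm _ n]
  rw [← sum_finsuppAntidiag_eq_sum_piAntidiag s m fun f =>
    if ∑ j ∈ s, j * f j = n then (Nat.multinomial s f : R) * ∏ j ∈ s, c j ^ f j else 0]
  refine sum_congr rfl fun μ hμ => ?_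
  have hsupp := (mem_finsuppAntidiag.mp hμ).2
  rw [Finsupp.sum_of_support_subset _ hsupp _ (by simp),
    Finsupp.multinomial_eq_of_support_subset hsupp, prod_subset hsupp (by simp_all)]

theorem X_pow_succ_dvd_sub_sum_C_mul_X_pow {f : R⟦X⟧} (hf : constantCoeff f = 0) (n : ℕ) :
    X ^ (n + 1) ∣ f - ∑ j ∈ Icc 1 n, C (coeff j f) * X ^ j := by
  refine X_pow_dvd_iff.mpr fun d hd => ?_
  simp only [map_sub, map_sum, coeff_C_mul_X_pow, sum_ite_eq, mem_Icc]
  split_ifs with hd1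
  · exact sub_self _
  · obtain rfl : d = 0 := by omega
    simpa using hf

theorem coeff_pow_of_constantCoeff_eq_zero {f : R⟦X⟧} (hf : constantCoeff f = 0) (m n : ℕ) :
    coeff n (f ^ m) =
      ∑ μ ∈ ((Icc 1 n).finsuppAntidiag m).filter (fun μ => (μ.sum fun j i => j * i) = n),
        (μ.multinomial : R) * ∏ j ∈ μ.support, coeff j f ^ μ j := by
  rw [coeff_eq_of_X_pow_dvd_sub ((X_pow_succ_dvd_sub_sum_C_mul_X_pow hf n).trans
    (sub_dvd_pow_sub_pow _ _ m)) n.lt_succ_self, coeff_pow_sum_C_mul_X_pow]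

variable [Algebra ℚ R]

theorem coeff_X_mul_derivative_mul_pow_eq_smul (f : R⟦X⟧) (k n : ℕ) :
    coeff n (X * d⁄dX R f * f ^ k) = ((n : ℚ) / (k + 1)) • coeff n (f ^ (k + 1)) := by
  have hk : ((k : R) + 1) = algebraMap ℚ R (k + 1) := by simp
  rw [div_eq_inv_mul, mul_smul, Algebra.smul_def (n : ℚ), map_natCast,
    ← coeff_X_mul_derivative_mul_pow, hk, ← Algebra.smul_def, smul_smul,
    inv_mul_cancel₀ (by positivity), one_smul]

theorem inv_smul_coeff_neg_X_mul_derivative_mul_eq_sum {f v : R⟦X⟧}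
    (hf : constantCoeff f = 0) (hv : (1 + f) * v = 1) {n : ℕ} (hn : n ≠ 0) :
    (n : ℚ)⁻¹ • coeff n (-(X * d⁄dX R f) * v) =
      ∑ k ∈ range (n + 1), ((-1) ^ (k + 1) / (k + 1) : ℚ) • coeff n (f ^ (k + 1)) := by
  rw [coeff_mul_eq_coeff_mul_geom_sum hf hv _ n.lt_succ_self, mul_sum, map_sum, smul_sum]
  refine sum_congr rfl fun k _ => ?_
  have hsign : -(X * d⁄dX R f) * (-f) ^ k =
      C (algebraMap ℚ R ((-1) ^ (k + 1))) * (X * d⁄dX R f * f ^ k) := by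
    simp only [map_pow, map_neg, map_one]
    ring
  rw [hsign, coeff_C_mul, coeff_X_mul_derivative_mul_pow_eq_smul, ← Algebra.smul_def,
    smul_smul, smul_smul]
  congr 1
  field_simp

end PowerSeries

namespace Finsupp

variable (μ : ℕ →₀ ℕ)

theorem support_subset_Icc_of_apply_zero (h0 : μ 0 = 0) :
    μ.support ⊆ Icc 1 (μ.sum fun j i => j * i) := by
  intro j hj
  have hμj : μ j ≠ 0 := mem_support_iff.mp hj
  have hj0 : j ≠ 0 := by rintro rfl; exact hμj h0
  refine mem_Icc.mpr ⟨Nat.one_le_iff_ne_zero.mpr hj0, ?_⟩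
  calc j ≤ j * μ j := Nat.le_mul_of_pos_right j (Nat.pos_of_ne_zero hμj)
    _ ≤ μ.sum fun j i => j * i := Finset.single_le_sum (f := fun j => j * μ j) (by simp) hj

theorem sum_le_sum_mul_le_mul_sum {n : ℕ} (hs : μ.support ⊆ Icc 1 n) :
    (μ.sum fun _ i => i) ≤ (μ.sum fun j i => j * i) ∧
      (μ.sum fun j i => j * i) ≤ n * μ.sum fun _ i => i := by
  unfold Finsupp.sum
  rw [Finset.mul_sum]
  constructor <;> refine Finset.sum_le_sum fun j hj => ?_ <;> have := mem_Icc.mp (hs hj)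
  · exact Nat.le_mul_of_pos_left _ this.1
  · exact Nat.mul_le_mul_right _ this.2

theorem cast_multinomial_of_sum_eq {k : ℕ} (hμ : (μ.sum fun _ i => i) = k) :
    (μ.multinomial : ℚ) = k.factorial * (∏ j ∈ μ.support, ((μ j).factorial : ℚ))⁻¹ := by
  have hspec := Nat.multinomial_spec μ.support μ
  rw [show ∑ j ∈ μ.support, μ j = k from hμ] at hspec
  rw [multinomial_eq, ← hspec]
  push_cast
  field_simp

end Finsupp

-- `μ j` is the multiplicity of the part `j`; the union is over the number `k + 1` of parts.
def partitionMultiplicities (n : ℕ) : Finset (ℕ →₀ ℕ) :=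
  (range (n + 1)).biUnion fun k =>
    ((Icc 1 n).finsuppAntidiag (k + 1)).filter fun μ => (μ.sum fun j i => j * i) = n

theorem mem_partitionMultiplicities {n : ℕ} (hn : n ≠ 0) {μ : ℕ →₀ ℕ} :
    μ ∈ partitionMultiplicities n ↔ μ 0 = 0 ∧ (μ.sum fun j i => j * i) = n := by
  simp only [partitionMultiplicities, mem_biUnion, mem_range, mem_filter, mem_finsuppAntidiag']
  constructor
  · rintro ⟨k, -, ⟨-, hsupp⟩, hw⟩
    exact ⟨Finsupp.notMem_support_iff.mp fun h0 => by simpa using hsupp h0, hw⟩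
  · rintro ⟨h0, hw⟩
    have hsupp := hw ▸ μ.support_subset_Icc_of_apply_zero h0
    obtain ⟨hle, hge⟩ := μ.sum_le_sum_mul_le_mul_sum hsupp
    refine ⟨(μ.sum fun _ i => i) - 1, by omega, ⟨?_, hsupp⟩, hw⟩
    have : 0 < μ.sum fun _ i => i := Nat.pos_of_ne_zero fun h => hn (by simp_all)
    omega

theorem sum_partitionMultiplicities {M : Type*} [AddCommMonoid M] (n : ℕ)
    (F : (ℕ →₀ ℕ) → M) :
    ∑ μ ∈ partitionMultiplicities n, F μ =
      ∑ k ∈ range (n + 1),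
        ∑ μ ∈ ((Icc 1 n).finsuppAntidiag (k + 1)).filter
          (fun μ => (μ.sum fun j i => j * i) = n), F μ := by
  refine sum_biUnion fun k _ l _ hkl => disjoint_left.mpr fun μ hk hl => hkl ?_
  simp only [mem_filter, mem_finsuppAntidiag'] at hk hl
  omega

def faberCoeff (μ : ℕ →₀ ℕ) : ℚ :=
  (-1 : ℚ) ^ (μ.sum fun _ m => m) * (((μ.sum fun _ m => m) - 1).factorial : ℚ) *
    (∏ j ∈ μ.support, ((μ j).factorial : ℚ))⁻¹

theorem faberCoeff_eq_of_sum_eq {μ : ℕ →₀ ℕ} {k : ℕ} (hμ : (μ.sum fun _ m => m) = k + 1) :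
    faberCoeff μ = (-1) ^ (k + 1) / (k + 1) * μ.multinomial := by
  rw [faberCoeff, μ.cast_multinomial_of_sum_eq hμ, hμ, Nat.add_sub_cancel, Nat.factorial_succ]
  push_cast
  field_simp

section Faber

variable {R : Type*} [CommRing R] (b : ℕ → R)

theorem constantCoeff_hSeries_sub_one : constantCoeff (hSeries b - 1) = 0 := by
  simp [hSeries, ← coeff_zero_eq_constantCoeff]

theorem coeff_hSeries_sub_one {j : ℕ} (hj : j ≠ 0) : coeff j (hSeries b - 1) = b j := by
  simp [hSeries, hj]

variable [Algebra ℚ R]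

theorem inv_smul_faberQ_eq_sum {n : ℕ} (hn : n ≠ 0) :
    (n : ℚ)⁻¹ • faberQ b n =
      ∑ k ∈ range (n + 1),
        ((-1) ^ (k + 1) / (k + 1) : ℚ) • coeff n ((hSeries b - 1) ^ (k + 1)) := by
  have hinv : (1 + (hSeries b - 1)) * (hSeries b).invOfUnit 1 = 1 := by
    rw [add_sub_cancel]
    exact mul_invOfUnit _ _ (by simp [hSeries])
  rw [← inv_smul_coeff_neg_X_mul_derivative_mul_eq_sum (constantCoeff_hSeries_sub_one b) hinv hn,
    faberQ, map_sub, derivative_one, sub_zero]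
  rfl

theorem smul_coeff_pow_hSeries_sub_one (n k : ℕ) :
    ((-1) ^ (k + 1) / (k + 1) : ℚ) • coeff n ((hSeries b - 1) ^ (k + 1)) =
      ∑ μ ∈ ((Icc 1 n).finsuppAntidiag (k + 1)).filter (fun μ => (μ.sum fun j i => j * i) = n),
        faberCoeff μ • ∏ j ∈ μ.support, b j ^ μ j := by
  rw [coeff_pow_of_constantCoeff_eq_zero (constantCoeff_hSeries_sub_one b), smul_sum]
  refine sum_congr rfl fun μ hμ => ?_
  obtain ⟨hsum, hsupp⟩ := mem_finsuppAntidiag'.mp (mem_filter.mp hμ).1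
  have hcoeff : ∏ j ∈ μ.support, coeff j (hSeries b - 1) ^ μ j = ∏ j ∈ μ.support, b j ^ μ j :=
    prod_congr rfl fun j hj => by
      rw [coeff_hSeries_sub_one b (Nat.one_le_iff_ne_zero.mp (mem_Icc.mp (hsupp hj)).1)]
  rw [hcoeff, faberCoeff_eq_of_sum_eq hsum, mul_smul, ← nsmul_eq_mul,
    ← Nat.cast_smul_eq_nsmul ℚ]

end Faber

/-- Explicit formula for the Faber polynomials:
`(1/n)·𝒬ₙ(b) = ∑_{μ : ∑ j·μⱼ = n} (−1)^{∑ μⱼ} (∑ μⱼ − 1)! ∏ⱼ bⱼ^{μⱼ}/μⱼ!`,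
the sum being over finitely supported sequences `μ = (μ₁, μ₂, …)` of nonnegative
integers (indexed by `j ≥ 1`, i.e. `μ 0 = 0`) with `∑ j·μⱼ = n`. -/
theorem faberQ_explicit {R : Type*} [CommRing R] [Algebra ℚ R] (b : ℕ → R) (n : ℕ)
    (hn : 1 ≤ n) :
    ((n : ℚ)⁻¹ : ℚ) • faberQ b n =
      ∑ᶠ (μ : ℕ →₀ ℕ) (_ : μ 0 = 0 ∧ (μ.sum fun j m => j * m) = n),
        (((-1 : ℚ) ^ (μ.sum fun _ m => m) *
            (((μ.sum fun _ m => m) - 1).factorial : ℚ) *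
            (∏ j ∈ μ.support, ((μ j).factorial : ℚ))⁻¹) •
          ∏ j ∈ μ.support, b j ^ (μ j)) := by
  have hn0 : n ≠ 0 := Nat.one_le_iff_ne_zero.mp hn
  change _ = ∑ᶠ (μ : ℕ →₀ ℕ) (_ : μ 0 = 0 ∧ (μ.sum fun j m => j * m) = n),
    faberCoeff μ • ∏ j ∈ μ.support, b j ^ μ j
  rw [finsum_cond_eq_sum_of_cond_iff _ fun _ => (mem_partitionMultiplicities hn0).symm,
    sum_partitionMultiplicities, inv_smul_faberQ_eq_sum b hn0]
  exact sum_congr rfl fun k _ => smul_coeff_pow_hSeries_sub_one b n k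
end
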